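/- arXiv:0809.4427 — 6 statements merged into one kernel-verified Lean document; each statement's English description precedes it below -/
import Mathlib

section
/- Let V and W be finite-dimensional real inner product spaces with dim V ≥ 3, let C ≥ 0 be a real constant, and let B : V × V → W be a symmetric bilinear map satisfying ⟨B(X,Z), B(Y,Z)⟩ = C·⟨X,Y⟩·⟨Z,Z⟩ for all X, Y, Z ∈ V. Then C = 0 and B = 0. -/
/-!
Polarizing the identity in `Z` and using the symmetry of `B`, an orthonormal family `e` satisfies
`⟪B eᵢ eᵢ, B eᵢ eᵢ⟫ = C` and `⟪B eᵢ eᵢ, B eⱼ eⱼ⟫ = -C` for `i ≠ j`. For an orthonormal basis of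
`n` vectors, the squared norm of `∑ B eᵢ eᵢ` is therefore `n (2 - n) C`, which is negative for
`n ≥ 3` unless `C = 0`. Once `C = 0`, the identity with `X = Y` gives `‖B X Z‖² = 0`.
-/

open scoped RealInnerProductSpace

section

variable {V W : Type*} [NormedAddCommGroup V] [InnerProductSpace ℝ V]
  [NormedAddCommGroup W] [InnerProductSpace ℝ W] {B : V →ₗ[ℝ] V →ₗ[ℝ] W} {C : ℝ}

theorem inner_add_inner_swap_eq_of_inner_eq
    (hB : ∀ X Y Z : V, ⟪B X Z, B Y Z⟫ = C * ⟪X, Y⟫ * ⟪Z, Z⟫) (X Y Z T : V) :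
    ⟪B X Z, B Y T⟫ + ⟪B X T, B Y Z⟫ = 2 * C * ⟪X, Y⟫ * ⟪Z, T⟫ := by
  have h := hB X Y (Z + T)
  simp only [map_add, inner_add_left, inner_add_right] at h
  linear_combination h - hB X Y Z - hB X Y T - C * ⟪X, Y⟫ * real_inner_comm T Z

theorem inner_diag_diag_of_orthonormal
    (hB : ∀ X Y Z : V, ⟪B X Z, B Y Z⟫ = C * ⟪X, Y⟫ * ⟪Z, Z⟫) (hsymm : ∀ X Y : V, B X Y = B Y X)
    {ι : Type*} [DecidableEq ι] {e : ι → V} (he : Orthonormal ℝ e) (i j : ι) :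
    ⟪B (e i) (e i), B (e j) (e j)⟫ = if i = j then C else -C := by
  rw [orthonormal_iff_ite] at he
  split_ifs with hij
  · subst hij
    rw [hB, he, if_pos rfl]
    ring
  · have hpol := inner_add_inner_swap_eq_of_inner_eq hB (e i) (e j) (e i) (e j)
    have hcross := hB (e i) (e i) (e j)
    simp only [he, hij, if_true, if_false, mul_zero, mul_one] at hpol hcross
    rw [hsymm (e j) (e i), hcross] at hpol
    linarith

theorem norm_sum_diag_sq_of_orthonormal
    (hB : ∀ X Y Z : V, ⟪B X Z, B Y Z⟫ = C * ⟪X, Y⟫ * ⟪Z, Z⟫) (hsymm : ∀ X Y : V, B X Y = B Y X)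
    {ι : Type*} [Fintype ι] {e : ι → V} (he : Orthonormal ℝ e) :
    ‖∑ i, B (e i) (e i)‖ ^ 2 = Fintype.card ι * (2 - Fintype.card ι) * C := by
  classical
  have hite : ∀ i j : ι, (if i = j then C else -C) = (if i = j then 2 * C else 0) - C := by
    intro i j
    split_ifs <;> ring
  rw [← real_inner_self_eq_norm_sq, sum_inner]
  simp_rw [inner_sum, inner_diag_diag_of_orthonormal hB hsymm he, hite, Finset.sum_sub_distrib,
    Finset.sum_ite_eq, Finset.mem_univ, if_true, Finset.sum_const, Finset.card_univ, nsmul_eq_mul]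
  ring

theorem const_eq_zero_of_three_le_finrank [FiniteDimensional ℝ V]
    (hdim : 3 ≤ Module.finrank ℝ V)
    (hB : ∀ X Y Z : V, ⟪B X Z, B Y Z⟫ = C * ⟪X, Y⟫ * ⟪Z, Z⟫) (hsymm : ∀ X Y : V, B X Y = B Y X) :
    C = 0 := by
  set b := stdOrthonormalBasis ℝ V
  have hsum := norm_sum_diag_sq_of_orthonormal hB hsymm b.orthonormal
  rw [Fintype.card_fin] at hsum
  have hdiag := inner_diag_diag_of_orthonormal hB hsymm b.orthonormal ⟨0, by omega⟩ ⟨0, by omega⟩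
  rw [if_pos rfl] at hdiag
  have hC_nonneg : 0 ≤ C := hdiag ▸ real_inner_self_nonneg
  have hn : (3 : ℝ) ≤ Module.finrank ℝ V := by exact_mod_cast hdim
  have hgap : 0 ≤ ((Module.finrank ℝ V : ℝ) - 3) * (Module.finrank ℝ V + 1) * C :=
    mul_nonneg (mul_nonneg (by linarith) (by positivity)) hC_nonneg
  linarith [hsum ▸ sq_nonneg ‖∑ i, B (b i) (b i)‖]

end

theorem stmt0_general {V W : Type*} [NormedAddCommGroup V] [InnerProductSpace ℝ V]
    [NormedAddCommGroup W] [InnerProductSpace ℝ W]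
    [FiniteDimensional ℝ V]
    (hdim : 3 ≤ Module.finrank ℝ V) (C : ℝ)
    (B : V →ₗ[ℝ] V →ₗ[ℝ] W) (hsymm : ∀ X Y : V, B X Y = B Y X)
    (hB : ∀ X Y Z : V, ⟪B X Z, B Y Z⟫ = C * ⟪X, Y⟫ * ⟪Z, Z⟫) :
    C = 0 ∧ B = 0 := by
  have hC := const_eq_zero_of_three_le_finrank hdim hB hsymm
  subst hC
  refine ⟨rfl, ?_⟩
  ext X Z
  simpa using hB X X Z

/-- If `dim V ≥ 3` and a symmetric bilinear map `B : V × V → W` satisfies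
`⟪B X Z, B Y Z⟫ = C ⟪X, Y⟫ ⟪Z, Z⟫` for all `X Y Z`, then `C = 0` and `B = 0`. -/
theorem stmt0 {V W : Type*} [NormedAddCommGroup V] [InnerProductSpace ℝ V]
    [NormedAddCommGroup W] [InnerProductSpace ℝ W]
    [FiniteDimensional ℝ V] [FiniteDimensional ℝ W]
    (hdim : 3 ≤ Module.finrank ℝ V) (C : ℝ) (hC : 0 ≤ C)
    (B : V →ₗ[ℝ] V →ₗ[ℝ] W) (hsymm : ∀ X Y : V, B X Y = B Y X)
    (hB : ∀ X Y Z : V, ⟪B X Z, B Y Z⟫ = C * ⟪X, Y⟫ * ⟪Z, Z⟫) :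
    C = 0 ∧ B = 0 :=
  stmt0_general hdim C B hsymm hB
end

section
/- Let V and W be real inner product spaces, C ≥ 0, and B : V × V → W a symmetric bilinear map satisfying ⟨B(X,Z), B(Y,Z)⟩ = C·⟨X,Y⟩·⟨Z,Z⟩ for all X,Y,Z. Then for any orthogonal pair X ⊥ Y one has ⟨B(X,X), B(Y,Y)⟩ = −C·⟨X,X⟩·⟨Y,Y⟩. -/
open scoped RealInnerProductSpace

theorem inner_bilin_polarization {V W : Type*} [NormedAddCommGroup V] [InnerProductSpace ℝ V]
    [NormedAddCommGroup W] [InnerProductSpace ℝ W] {C : ℝ} {B : V →ₗ[ℝ] V →ₗ[ℝ] W}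
    (hB : ∀ X Y Z : V, ⟪B X Z, B Y Z⟫ = C * ⟪X, Y⟫ * ⟪Z, Z⟫) (X Y Z Z' : V) :
    ⟪B X Z, B Y Z'⟫ + ⟪B X Z', B Y Z⟫ = 2 * C * ⟪X, Y⟫ * ⟪Z, Z'⟫ := by
  have hsum := hB X Y (Z + Z')
  simp only [map_add, inner_add_left, inner_add_right, hB X Y Z, hB X Y Z',
    real_inner_comm Z Z'] at hsum
  linarith

theorem stmt1_general {V W : Type*} [NormedAddCommGroup V] [InnerProductSpace ℝ V]
    [NormedAddCommGroup W] [InnerProductSpace ℝ W]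
    (C : ℝ)
    (B : V →ₗ[ℝ] V →ₗ[ℝ] W) (hsymm : ∀ X Y : V, B X Y = B Y X)
    (hB : ∀ X Y Z : V, ⟪B X Z, B Y Z⟫ = C * ⟪X, Y⟫ * ⟪Z, Z⟫) :
    ∀ X Y : V, ⟪X, Y⟫ = 0 →
      ⟪B X X, B Y Y⟫ = -C * ⟪X, X⟫ * ⟪Y, Y⟫ := by
  intro X Y hXY
  have hpol := inner_bilin_polarization hB X Y X Y
  rw [hsymm Y X, hB X X Y, hXY] at hpol
  linarith

/-- If a symmetric bilinear map satisfies `⟪B X Z, B Y Z⟫ = C ⟪X, Y⟫ ⟪Z, Z⟫`, then for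
orthogonal `X, Y` one has `⟪B X X, B Y Y⟫ = -C ⟪X, X⟫ ⟪Y, Y⟫`. -/
theorem stmt1 {V W : Type*} [NormedAddCommGroup V] [InnerProductSpace ℝ V]
    [NormedAddCommGroup W] [InnerProductSpace ℝ W]
    (C : ℝ) (hC : 0 ≤ C)
    (B : V →ₗ[ℝ] V →ₗ[ℝ] W) (hsymm : ∀ X Y : V, B X Y = B Y X)
    (hB : ∀ X Y Z : V, ⟪B X Z, B Y Z⟫ = C * ⟪X, Y⟫ * ⟪Z, Z⟫) :
    ∀ X Y : V, ⟪X, Y⟫ = 0 →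
      ⟪B X X, B Y Y⟫ = -C * ⟪X, X⟫ * ⟪Y, Y⟫ :=
  stmt1_general C B hsymm hB
end

section
/- Let B : V × V → W be a nonzero symmetric bilinear map with dim V = 2 satisfying ⟨B(X,Z), B(Y,Z)⟩ = C·⟨X,Y⟩·⟨Z,Z⟩ for all X,Y,Z and some constant C > 0. Then for any orthonormal basis X, Y of V, the vectors ξ = B(X,X), ζ = B(Y,Y), η = B(X,Y) satisfy: ξ = −ζ, |ξ|² = |η|² = C, and ⟨ξ, η⟩ = 0. In particular the image of B spans a 2-dimensional subspace of W. -/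
/-!
For orthogonal `X`, `Y` the identity gives `⟪B X Z, B Y Z⟫ = 0` for every `Z`; taking
`Z = X + Y` and expanding yields `⟪B X X, B Y Y⟫ = -C ‖X‖² ‖Y‖²`, hence
`‖B X X + B Y Y‖² = C (‖X‖² - ‖Y‖²)²`, which vanishes when `‖X‖ = ‖Y‖`. On an orthonormal basis
the values of `B` are therefore `±ξ` and `η`, two orthogonal vectors of norm `√C`, so they span
the image of `B` and are linearly independent.
-/

open scoped RealInnerProductSpace

section Bilinear

variable {R M M' N : Type*} [CommRing R] [AddCommGroup M] [Module R M] [AddCommGroup M']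
  [Module R M'] [AddCommGroup N] [Module R N]

theorem LinearMap.apply_mem_of_basis {ι κ : Type*} (b : Module.Basis ι R M)
    (c : Module.Basis κ R M') (B : M →ₗ[R] M' →ₗ[R] N) {S : Submodule R N}
    (h : ∀ i j, B (b i) (c j) ∈ S) (x : M) (y : M') : B x y ∈ S := by
  have hzero : B.compr₂ S.mkQ = 0 :=
    LinearMap.ext_basis b c fun i j => (Submodule.Quotient.mk_eq_zero S).mpr (h i j)
  rw [← Submodule.Quotient.mk_eq_zero S]
  exact LinearMap.congr_fun₂ hzero x y

theorem LinearMap.span_range_eq_span_pair_of_basis_fin_two (b : Module.Basis (Fin 2) R M)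
    (B : M →ₗ[R] M →ₗ[R] N) (hsymm : ∀ X Y : M, B X Y = B Y X)
    (hneg : B (b 0) (b 0) = -B (b 1) (b 1)) :
    Submodule.span R (Set.range fun p : M × M => B p.1 p.2) =
      Submodule.span R {B (b 0) (b 0), B (b 0) (b 1)} := by
  refine le_antisymm (Submodule.span_le.mpr ?_) (Submodule.span_le.mpr ?_)
  · rintro _ ⟨⟨x, y⟩, rfl⟩
    refine B.apply_mem_of_basis b b (fun i j => ?_) x y
    have hξ : B (b 0) (b 0) ∈ Submodule.span R {B (b 0) (b 0), B (b 0) (b 1)} :=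
      Submodule.subset_span (Set.mem_insert _ _)
    have hη : B (b 0) (b 1) ∈ Submodule.span R {B (b 0) (b 0), B (b 0) (b 1)} :=
      Submodule.subset_span (Set.mem_insert_of_mem _ rfl)
    fin_cases i <;> fin_cases j
    · exact hξ
    · exact hη
    · simpa [hsymm (b 1) (b 0)] using hη
    · simpa [hneg] using Submodule.neg_mem _ hξ
  · rintro _ (rfl | rfl)
    · exact Submodule.subset_span ⟨(b 0, b 0), rfl⟩
    · exact Submodule.subset_span ⟨(b 0, b 1), rfl⟩

end Bilinear

theorem finrank_span_pair_of_inner_eq_zero {W : Type*} [NormedAddCommGroup W]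
    [InnerProductSpace ℝ W] {u v : W} (hu : u ≠ 0) (hv : v ≠ 0) (huv : ⟪u, v⟫ = 0) :
    Module.finrank ℝ (Submodule.span ℝ {u, v}) = 2 := by
  have hli : LinearIndependent ℝ ![u, v] := by
    refine linearIndependent_of_ne_zero_of_inner_eq_zero (fun i => ?_) (fun i j hij => ?_)
    · fin_cases i <;> assumption
    · fin_cases i <;> fin_cases j <;> simp_all [real_inner_comm]
  rw [← Matrix.range_cons_cons_empty u v ![], finrank_span_eq_card hli, Fintype.card_fin]

section Conformal

variable {V W : Type*} [NormedAddCommGroup V] [InnerProductSpace ℝ V] [NormedAddCommGroup W]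
  [InnerProductSpace ℝ W] {B : V →ₗ[ℝ] V →ₗ[ℝ] W} {C : ℝ}

theorem norm_apply_sq_of_conformal (hB : ∀ X Y Z : V, ⟪B X Z, B Y Z⟫ = C * ⟪X, Y⟫ * ⟪Z, Z⟫)
    (X Z : V) : ‖B X Z‖ ^ 2 = C * ‖X‖ ^ 2 * ‖Z‖ ^ 2 := by
  simp only [← real_inner_self_eq_norm_sq, hB]

theorem inner_apply_eq_zero_of_conformal
    (hB : ∀ X Y Z : V, ⟪B X Z, B Y Z⟫ = C * ⟪X, Y⟫ * ⟪Z, Z⟫) {X Y : V} (hXY : ⟪X, Y⟫ = 0)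
    (Z : V) : ⟪B X Z, B Y Z⟫ = 0 := by
  rw [hB, hXY, mul_zero, zero_mul]

theorem inner_apply_self_apply_self_of_conformal
    (hB : ∀ X Y Z : V, ⟪B X Z, B Y Z⟫ = C * ⟪X, Y⟫ * ⟪Z, Z⟫) (hsymm : ∀ X Y : V, B X Y = B Y X)
    {X Y : V} (hXY : ⟪X, Y⟫ = 0) : ⟪B X X, B Y Y⟫ = -(C * ‖X‖ ^ 2 * ‖Y‖ ^ 2) := by
  have hpol := inner_apply_eq_zero_of_conformal hB hXY (X + Y)
  have hXXY : ⟪B X X, B X Y⟫ = 0 := by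
    rw [hsymm X Y]; exact inner_apply_eq_zero_of_conformal hB hXY X
  have hXYY : ⟪B X Y, B Y Y⟫ = 0 := inner_apply_eq_zero_of_conformal hB hXY Y
  simp only [map_add, inner_add_left, inner_add_right, hsymm Y X,
    real_inner_self_eq_norm_sq, norm_apply_sq_of_conformal hB, hXXY, hXYY] at hpol
  linarith

theorem norm_apply_self_add_apply_self_sq_of_conformal
    (hB : ∀ X Y Z : V, ⟪B X Z, B Y Z⟫ = C * ⟪X, Y⟫ * ⟪Z, Z⟫) (hsymm : ∀ X Y : V, B X Y = B Y X)
    {X Y : V} (hXY : ⟪X, Y⟫ = 0) :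
    ‖B X X + B Y Y‖ ^ 2 = C * (‖X‖ ^ 2 - ‖Y‖ ^ 2) ^ 2 := by
  rw [norm_add_sq_real, inner_apply_self_apply_self_of_conformal hB hsymm hXY,
    norm_apply_sq_of_conformal hB, norm_apply_sq_of_conformal hB]
  ring

theorem apply_self_eq_neg_apply_self_of_conformal
    (hB : ∀ X Y Z : V, ⟪B X Z, B Y Z⟫ = C * ⟪X, Y⟫ * ⟪Z, Z⟫) (hsymm : ∀ X Y : V, B X Y = B Y X)
    {X Y : V} (hXY : ⟪X, Y⟫ = 0) (hnorm : ‖X‖ = ‖Y‖) : B X X = -B Y Y := by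
  have h := norm_apply_self_add_apply_self_sq_of_conformal hB hsymm hXY
  rw [hnorm, sub_self, zero_pow two_ne_zero, mul_zero, sq_eq_zero_iff, norm_eq_zero] at h
  exact eq_neg_of_add_eq_zero_left h

end Conformal

theorem stmt2_general {V W : Type*} [NormedAddCommGroup V] [InnerProductSpace ℝ V]
    [NormedAddCommGroup W] [InnerProductSpace ℝ W]
    (hdim : Module.finrank ℝ V = 2) (C : ℝ) (hC : 0 < C)
    (B : V →ₗ[ℝ] V →ₗ[ℝ] W) (hsymm : ∀ X Y : V, B X Y = B Y X)
    (hB : ∀ X Y Z : V, ⟪B X Z, B Y Z⟫ = C * ⟪X, Y⟫ * ⟪Z, Z⟫) :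
    (∀ X Y : V, ‖X‖ = 1 → ‖Y‖ = 1 → ⟪X, Y⟫ = 0 →
      B X X = -(B Y Y) ∧ ‖B X X‖ ^ 2 = C ∧ ‖B X Y‖ ^ 2 = C ∧ ⟪B X X, B X Y⟫ = 0) ∧
    Module.finrank ℝ
      (Submodule.span ℝ (Set.range fun p : V × V => B p.1 p.2)) = 2 := by
  have horth : ∀ X Y : V, ‖X‖ = 1 → ‖Y‖ = 1 → ⟪X, Y⟫ = 0 →
      B X X = -(B Y Y) ∧ ‖B X X‖ ^ 2 = C ∧ ‖B X Y‖ ^ 2 = C ∧ ⟪B X X, B X Y⟫ = 0 := by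
    intro X Y hX hY hXY
    refine ⟨apply_self_eq_neg_apply_self_of_conformal hB hsymm hXY (hX.trans hY.symm), ?_, ?_, ?_⟩
    · rw [norm_apply_sq_of_conformal hB, hX]; ring
    · rw [norm_apply_sq_of_conformal hB, hX, hY]; ring
    · rw [hsymm X Y]; exact inner_apply_eq_zero_of_conformal hB hXY X
  refine ⟨horth, ?_⟩
  have : FiniteDimensional ℝ V := Module.finite_of_finrank_eq_succ hdim
  let b := (stdOrthonormalBasis ℝ V).reindex (finCongr hdim)
  obtain ⟨hneg, hξ, hη, hξη⟩ :=
    horth (b 0) (b 1) (b.orthonormal.1 0) (b.orthonormal.1 1) (b.orthonormal.2 zero_ne_one)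
  have hne_zero {w : W} (hw : ‖w‖ ^ 2 = C) : w ≠ 0 := by
    rintro rfl
    rw [norm_zero, sq, mul_zero] at hw
    exact hC.ne hw
  rw [B.span_range_eq_span_pair_of_basis_fin_two b.toBasis hsymm (by simpa using hneg)]
  simp only [OrthonormalBasis.coe_toBasis]
  exact finrank_span_pair_of_inner_eq_zero (hne_zero hξ) (hne_zero hη) hξη

/-- For a nonzero symmetric bilinear map `B` on a 2-dimensional inner product space
satisfying the conformality identity with `C > 0`, the values on an orthonormal basis
satisfy `B X X = -(B Y Y)`, `‖B X X‖² = ‖B X Y‖² = C`, `⟪B X X, B X Y⟫ = 0`, and the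
image of `B` spans a 2-dimensional subspace of `W`. -/
theorem stmt2 {V W : Type*} [NormedAddCommGroup V] [InnerProductSpace ℝ V]
    [NormedAddCommGroup W] [InnerProductSpace ℝ W] [FiniteDimensional ℝ V]
    (hdim : Module.finrank ℝ V = 2) (C : ℝ) (hC : 0 < C)
    (B : V →ₗ[ℝ] V →ₗ[ℝ] W) (hB0 : B ≠ 0) (hsymm : ∀ X Y : V, B X Y = B Y X)
    (hB : ∀ X Y Z : V, ⟪B X Z, B Y Z⟫ = C * ⟪X, Y⟫ * ⟪Z, Z⟫) :
    (∀ X Y : V, ‖X‖ = 1 → ‖Y‖ = 1 → ⟪X, Y⟫ = 0 →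
      B X X = -(B Y Y) ∧ ‖B X X‖ ^ 2 = C ∧ ‖B X Y‖ ^ 2 = C ∧ ⟪B X X, B X Y⟫ = 0) ∧
    Module.finrank ℝ
      (Submodule.span ℝ (Set.range fun p : V × V => B p.1 p.2)) = 2 :=
  stmt2_general hdim C hC B hsymm hB
end

section
/- Identify ℝ² with ℂ. A symmetric bilinear map B : ℂ × ℂ → ℂ (over ℝ) satisfies ⟨B(X,Z), B(Y,Z)⟩ = C·⟨X,Y⟩·|Z|² for all X,Y,Z ∈ ℂ (with the real inner product ⟨u,v⟩ = Re(u·conj(v))) if and only if there exists θ ∈ ℝ such that B(X,Y) = ±√C·e^{iθ}·X·Y or B(X,Y) = ±√C·e^{iθ}·conj(X)·conj(Y). -/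
/-
Fix `Z`. The identity with `X = Y` says `|B Z X|² = C |Z|² |X|²`, so the `ℝ`-linear map
`X ↦ B Z X` is conformal. Writing it as `X ↦ a X + b X̄`, its squared modulus is
`(|a|² + |b|²) |X|² + 2 Re (a b̄ X²)`, so the cross term `a b̄` vanishes: `a = 0` or `b = 0`.
As `Z ↦ a` and `Z ↦ b` are additive, the two sets of `Z` where they vanish are subgroups
covering `ℂ`, hence one of them is all of `ℂ`. Symmetry of `B` then gives `B X Y = w X Y` or
`B X Y = w X̄ Ȳ` with `w = B 1 1`, and `|w|² = C`. The converse is a direct computation.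
-/

open Complex ComplexConjugate

theorem AddMonoidHom.eq_zero_or_eq_zero_of_forall_eq_zero_or_eq_zero {M N : Type*}
    [AddZeroClass M] [AddZeroClass N] (f g : M →+ N) (h : ∀ x, f x = 0 ∨ g x = 0) :
    f = 0 ∨ g = 0 := by
  by_contra! hfg
  obtain ⟨⟨x, hx⟩, ⟨y, hy⟩⟩ : (∃ x, f x ≠ 0) ∧ ∃ y, g y ≠ 0 := by
    simpa [DFunLike.ext_iff] using hfg
  have hgx : g x = 0 := (h x).resolve_left hx
  have hfy : f y = 0 := (h y).resolve_right hy
  rcases h (x + y) with hxy | hxy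
  · exact hx (by simpa [hfy] using hxy)
  · exact hy (by simpa [hgx] using hxy)

theorem eq_mul_mul_of_forall_eq_mul {α R : Type*} [CommMonoid R] {B : α → α → R}
    (hsymm : ∀ x y, B x y = B y x) {p φ : α → R} {e : α} (he : φ e = 1)
    (hB : ∀ x y, B x y = p x * φ y) (x y : α) : B x y = B e e * φ x * φ y := by
  have hp : ∀ x, p x = B e e * φ x := fun x => by
    rw [← mul_one (p x), ← he, ← hB, hsymm, hB, hB, he, mul_one]
  rw [hB, hp]

namespace Complex

-- The Wirtinger derivatives `∂f/∂z` and `∂f/∂z̄` of an `ℝ`-linear map `f`.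
noncomputable def holCoeff : (ℂ →ₗ[ℝ] ℂ) →+ ℂ where
  toFun f := (f 1 - I * f I) / 2
  map_zero' := by simp
  map_add' f g := by simp only [LinearMap.add_apply]; ring

noncomputable def antiholCoeff : (ℂ →ₗ[ℝ] ℂ) →+ ℂ where
  toFun f := (f 1 + I * f I) / 2
  map_zero' := by simp
  map_add' f g := by simp only [LinearMap.add_apply]; ring

theorem holCoeff_mul_add_antiholCoeff_mul_conj (f : ℂ →ₗ[ℝ] ℂ) (z : ℂ) :
    holCoeff f * z + antiholCoeff f * conj z = f z := by
  obtain ⟨x, y, rfl⟩ : ∃ x y : ℝ, z = x + y * I := ⟨z.re, z.im, (re_add_im z).symm⟩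
  have hf : f (x + y * I) = x * f 1 + y * f I := by
    rw [show (x : ℂ) + y * I = x • (1 : ℂ) + y • I by simp [real_smul], map_add, map_smul,
      map_smul, real_smul, real_smul]
  simp only [holCoeff, antiholCoeff, AddMonoidHom.coe_mk, ZeroHom.coe_mk, hf, map_add,
    map_mul, conj_ofReal, conj_I]
  linear_combination (-(y : ℂ) * f I) * I_sq

theorem apply_eq_holCoeff_mul {f : ℂ →ₗ[ℝ] ℂ} (hf : antiholCoeff f = 0) (z : ℂ) :
    f z = holCoeff f * z := by
  simpa [hf] using (holCoeff_mul_add_antiholCoeff_mul_conj f z).symm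

theorem apply_eq_antiholCoeff_mul_conj {f : ℂ →ₗ[ℝ] ℂ} (hf : holCoeff f = 0) (z : ℂ) :
    f z = antiholCoeff f * conj z := by
  simpa [hf] using (holCoeff_mul_add_antiholCoeff_mul_conj f z).symm

theorem normSq_mul_add_mul_conj (a b z : ℂ) :
    normSq (a * z + b * conj z) =
      (normSq a + normSq b) * normSq z + 2 * (a * conj b * z ^ 2).re := by
  simp only [normSq_apply, add_re, add_im, mul_re, mul_im, conj_re, conj_im, pow_two]
  ring

theorem holCoeff_eq_zero_or_antiholCoeff_eq_zero {f : ℂ →ₗ[ℝ] ℂ} {c : ℝ}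
    (hf : ∀ z, normSq (f z) = c * normSq z) : holCoeff f = 0 ∨ antiholCoeff f = 0 := by
  set w := holCoeff f * conj (antiholCoeff f)
  have hnormSq (z : ℂ) : (normSq (holCoeff f) + normSq (antiholCoeff f)) * normSq z
      + 2 * (w * z ^ 2).re = c * normSq z := by
    rw [← normSq_mul_add_mul_conj, holCoeff_mul_add_antiholCoeff_mul_conj, hf]
  -- Testing at `1`, `I` and `1 + I` kills the real and the imaginary part of the cross term.
  have h1 := hnormSq 1
  have hI := hnormSq I
  have h1I := hnormSq (1 + I)
  have hw : w = 0 := by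
    simp only [normSq_apply, add_re, add_im, mul_re, mul_im, one_re, one_im, I_re, I_im,
      pow_two] at h1 hI h1I
    apply Complex.ext <;> simp only [zero_re, zero_im] <;> linarith
  simpa [w] using hw

theorem normSq_eq_iff_exists_smul_exp {C : ℝ} (hC : 0 ≤ C) {w : ℂ} :
    normSq w = C ↔
      ∃ θ ε : ℝ, (ε = 1 ∨ ε = -1) ∧ w = (ε * √C : ℝ) • exp (θ * I) := by
  constructor
  · rintro rfl
    refine ⟨arg w, 1, Or.inl rfl, ?_⟩
    rw [one_mul, ← norm_def, real_smul, norm_mul_exp_arg_mul_I]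
  · rintro ⟨θ, ε, hε, rfl⟩
    have hε2 : ε * ε = 1 := by rcases hε with rfl | rfl <;> norm_num
    rw [real_smul, normSq_mul, normSq_ofReal, normSq_eq_norm_sq, norm_exp_ofReal_mul_I,
      mul_mul_mul_comm, hε2, Real.mul_self_sqrt hC]
    ring

theorem re_mul_mul_mul_conj_mul_mul (w X Y Z : ℂ) :
    (w * X * Z * conj (w * Y * Z)).re = normSq w * (X * conj Y).re * normSq Z := by
  have : w * X * Z * conj (w * Y * Z) = (normSq w * normSq Z : ℝ) * (X * conj Y) := by
    push_cast
    rw [← mul_conj, ← mul_conj]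
    simp only [map_mul]
    ring
  rw [this, re_ofReal_mul]
  ring

end Complex

/-- Identifying `ℝ²` with `ℂ` (real inner product `⟨u, v⟩ = Re (u * conj v)`), a symmetric
`ℝ`-bilinear map `B : ℂ × ℂ → ℂ` satisfies `⟨B X Z, B Y Z⟩ = C ⟨X, Y⟩ |Z|²` for all
`X Y Z` if and only if `B (X, Y) = ± √C e^{iθ} X Y` or `B (X, Y) = ± √C e^{iθ} X̄ Ȳ`
for some angle `θ`. -/
theorem stmt3 (C : ℝ) (hC : 0 ≤ C)
    (B : ℂ →ₗ[ℝ] ℂ →ₗ[ℝ] ℂ) (hsymm : ∀ X Y : ℂ, B X Y = B Y X) :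
    (∀ X Y Z : ℂ,
        (B X Z * (starRingEnd ℂ) (B Y Z)).re
          = C * (X * (starRingEnd ℂ) Y).re * (Z * (starRingEnd ℂ) Z).re)
    ↔ ∃ θ : ℝ, ∃ ε : ℝ, (ε = 1 ∨ ε = -1) ∧
        ((∀ X Y : ℂ, B X Y = (ε * Real.sqrt C : ℝ) •
            (Complex.exp (θ * Complex.I) * X * Y)) ∨
         (∀ X Y : ℂ, B X Y = (ε * Real.sqrt C : ℝ) •
            (Complex.exp (θ * Complex.I) * (starRingEnd ℂ) X * (starRingEnd ℂ) Y))) := by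
  simp only [← smul_mul_assoc, mul_conj, ofReal_re]
  constructor
  · intro h
    have hconf (Z X : ℂ) : normSq (B Z X) = C * normSq Z * normSq X := by
      have := h X X Z
      rwa [mul_conj, mul_conj, ofReal_re, ofReal_re, mul_right_comm, ← hsymm] at this
    have hform := AddMonoidHom.eq_zero_or_eq_zero_of_forall_eq_zero_or_eq_zero
      (holCoeff.comp B.toAddMonoidHom) (antiholCoeff.comp B.toAddMonoidHom)
      fun Z => holCoeff_eq_zero_or_antiholCoeff_eq_zero (hconf Z)
    obtain ⟨θ, ε, hε, hw⟩ := (normSq_eq_iff_exists_smul_exp hC).mp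
      (by simpa using hconf 1 1)
    refine ⟨θ, ε, hε, ?_⟩
    rw [← hw]
    rcases hform with hhol | hantihol
    · exact Or.inr <| eq_mul_mul_of_forall_eq_mul hsymm (map_one _) fun Z =>
        apply_eq_antiholCoeff_mul_conj (DFunLike.congr_fun hhol Z)
    · exact Or.inl <| eq_mul_mul_of_forall_eq_mul (φ := id) hsymm rfl fun Z =>
        apply_eq_holCoeff_mul (DFunLike.congr_fun hantihol Z)
  · rintro ⟨θ, ε, hε, hB⟩ X Y Z
    have hw := (normSq_eq_iff_exists_smul_exp hC).mpr ⟨θ, ε, hε, rfl⟩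
    rcases hB with hB | hB
    · rw [hB, hB, re_mul_mul_mul_conj_mul_mul, hw]
    · rw [hB, hB, re_mul_mul_mul_conj_mul_mul, hw, normSq_conj, ← map_mul, conj_re]
end

section
/- Let B : V × V → W be a symmetric bilinear map on a 2-dimensional real inner product space V satisfying ⟨B(X,Z), B(Y,Z)⟩ = C·⟨X,Y⟩·⟨Z,Z⟩ for all X,Y,Z with C > 0. Then the trace of B vanishes: for any orthonormal basis (e₁, e₂) of V, B(e₁,e₁) + B(e₂,e₂) = 0. -/
/-!
Polarizing the identity in `Z` shows `⟪B e₁ e₁, B e₂ e₂⟫ = -⟪B e₁ e₂, B e₂ e₁⟫` for orthogonal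
`e₁, e₂`, and by symmetry the right side is `-C ‖e₁‖² ‖e₂‖²`. Expanding the square then gives
`‖B e₁ e₁ + B e₂ e₂‖² = C (‖e₁‖² - ‖e₂‖²)²`, which vanishes for unit vectors.
-/

open scoped RealInnerProductSpace

section ConformalBilinear

variable {V W : Type*} [NormedAddCommGroup V] [InnerProductSpace ℝ V]
    [NormedAddCommGroup W] [InnerProductSpace ℝ W]
    {C : ℝ} {B : V →ₗ[ℝ] V →ₗ[ℝ] W}

theorem inner_apply_add_inner_apply_swap
    (hB : ∀ X Y Z : V, ⟪B X Z, B Y Z⟫ = C * ⟪X, Y⟫ * ⟪Z, Z⟫) (X Y Z Z' : V) :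
    ⟪B X Z, B Y Z'⟫ + ⟪B X Z', B Y Z⟫ = 2 * C * ⟪X, Y⟫ * ⟪Z, Z'⟫ := by
  have hsum := hB X Y (Z + Z')
  simp only [map_add, inner_add_left, inner_add_right, hB X Y Z, hB X Y Z'] at hsum
  rw [real_inner_comm Z Z'] at hsum
  linear_combination hsum

theorem inner_apply_self_apply_self_of_inner_eq_zero (hsymm : ∀ X Y : V, B X Y = B Y X)
    (hB : ∀ X Y Z : V, ⟪B X Z, B Y Z⟫ = C * ⟪X, Y⟫ * ⟪Z, Z⟫) {e₁ e₂ : V} (h : ⟪e₁, e₂⟫ = 0) :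
    ⟪B e₁ e₁, B e₂ e₂⟫ = -(C * ‖e₁‖ ^ 2 * ‖e₂‖ ^ 2) := by
  have hpol := inner_apply_add_inner_apply_swap hB e₁ e₂ e₁ e₂
  rw [h, hsymm e₂ e₁, hB] at hpol
  rw [← real_inner_self_eq_norm_sq, ← real_inner_self_eq_norm_sq]
  linarith

theorem norm_apply_self_add_apply_self_sq (hsymm : ∀ X Y : V, B X Y = B Y X)
    (hB : ∀ X Y Z : V, ⟪B X Z, B Y Z⟫ = C * ⟪X, Y⟫ * ⟪Z, Z⟫) {e₁ e₂ : V} (h : ⟪e₁, e₂⟫ = 0) :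
    ‖B e₁ e₁ + B e₂ e₂‖ ^ 2 = C * (‖e₁‖ ^ 2 - ‖e₂‖ ^ 2) ^ 2 := by
  have h₁₁ : ‖B e₁ e₁‖ ^ 2 = C * ‖e₁‖ ^ 2 * ‖e₁‖ ^ 2 := by
    rw [← real_inner_self_eq_norm_sq, hB, real_inner_self_eq_norm_sq]
  have h₂₂ : ‖B e₂ e₂‖ ^ 2 = C * ‖e₂‖ ^ 2 * ‖e₂‖ ^ 2 := by
    rw [← real_inner_self_eq_norm_sq, hB, real_inner_self_eq_norm_sq]
  rw [norm_add_sq_real, h₁₁, h₂₂, inner_apply_self_apply_self_of_inner_eq_zero hsymm hB h]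
  ring

end ConformalBilinear

theorem stmt4_general {V W : Type*} [NormedAddCommGroup V] [InnerProductSpace ℝ V]
    [NormedAddCommGroup W] [InnerProductSpace ℝ W]
    (C : ℝ)
    (B : V →ₗ[ℝ] V →ₗ[ℝ] W) (hsymm : ∀ X Y : V, B X Y = B Y X)
    (hB : ∀ X Y Z : V, ⟪B X Z, B Y Z⟫ = C * ⟪X, Y⟫ * ⟪Z, Z⟫) :
    ∀ e₁ e₂ : V, ‖e₁‖ = 1 → ‖e₂‖ = 1 → ⟪e₁, e₂⟫ = 0 →
      B e₁ e₁ + B e₂ e₂ = 0 := by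
  intro e₁ e₂ h₁ h₂ h₁₂
  have hsq := norm_apply_self_add_apply_self_sq hsymm hB h₁₂
  rw [h₁, h₂, sub_self, zero_pow two_ne_zero, mul_zero, sq_eq_zero_iff, norm_eq_zero] at hsq
  exact hsq

/-- A symmetric bilinear map on a 2-dimensional real inner product space satisfying the
conformality identity with `C > 0` has vanishing trace: for any orthonormal basis
`(e₁, e₂)`, `B e₁ e₁ + B e₂ e₂ = 0`. -/
theorem stmt4 {V W : Type*} [NormedAddCommGroup V] [InnerProductSpace ℝ V]
    [NormedAddCommGroup W] [InnerProductSpace ℝ W] [FiniteDimensional ℝ V]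
    (hdim : Module.finrank ℝ V = 2) (C : ℝ) (hC : 0 < C)
    (B : V →ₗ[ℝ] V →ₗ[ℝ] W) (hsymm : ∀ X Y : V, B X Y = B Y X)
    (hB : ∀ X Y Z : V, ⟪B X Z, B Y Z⟫ = C * ⟪X, Y⟫ * ⟪Z, Z⟫) :
    ∀ e₁ e₂ : V, ‖e₁‖ = 1 → ‖e₂‖ = 1 → ⟪e₁, e₂⟫ = 0 →
      B e₁ e₁ + B e₂ e₂ = 0 :=
  stmt4_general C B hsymm hB
end

section
/- Let B : V × V → W be a symmetric bilinear map between real inner product spaces with dim V = 2 satisfying ⟨B(X,Z), B(Y,Z)⟩ = C⟨X,Y⟩⟨Z,Z⟩ for all X,Y,Z with C > 0. If dim W ≤ 1, then no such nonzero B exists; equivalently, if B is nonzero then the image of B spans a subspace of W of dimension exactly 2, so dim W ≥ 2. -/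
open scoped RealInnerProductSpace

/-- Codimension obstruction: for a symmetric bilinear map `B` on a 2-dimensional space
satisfying the conformality identity with `C > 0`, if `dim W ≤ 1` then `B = 0`;
and if `B ≠ 0` then the image of `B` spans exactly a 2-dimensional subspace of `W`,
so `dim W ≥ 2`. -/
theorem stmt11 {V W : Type*} [NormedAddCommGroup V] [InnerProductSpace ℝ V]
    [NormedAddCommGroup W] [InnerProductSpace ℝ W]
    [FiniteDimensional ℝ V] [FiniteDimensional ℝ W]
    (hdim : Module.finrank ℝ V = 2) (C : ℝ) (hC : 0 < C)
    (B : V →ₗ[ℝ] V →ₗ[ℝ] W) (hsymm : ∀ X Y : V, B X Y = B Y X)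
    (hB : ∀ X Y Z : V, ⟪B X Z, B Y Z⟫ = C * ⟪X, Y⟫ * ⟪Z, Z⟫) :
    (Module.finrank ℝ W ≤ 1 → B = 0) ∧
    (B ≠ 0 →
      Module.finrank ℝ
        (Submodule.span ℝ (Set.range fun p : V × V => B p.1 p.2)) = 2 ∧
      2 ≤ Module.finrank ℝ W) := by
  have b : OrthonormalBasis (Fin 2) ℝ V :=
    (stdOrthonormalBasis ℝ V).reindex (finCongr hdim)
  set e0 := b 0 with he0
  set e1 := b 1 with he1
  have hortho := orthonormal_iff_ite.mp b.orthonormal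
  have h00 : ⟪e0, e0⟫ = (1 : ℝ) := (hortho 0 0).trans (by simp)
  have h01 : ⟪e0, e1⟫ = (0 : ℝ) := (hortho 0 1).trans (by simp)
  have h10 : ⟪e1, e0⟫ = (0 : ℝ) := (hortho 1 0).trans (by simp)
  have h11 : ⟪e1, e1⟫ = (1 : ℝ) := (hortho 1 1).trans (by simp)
  set u := B e0 e0 with hu
  set v := B e0 e1 with hv
  set w := B e1 e1 with hw
  have hBv : B e1 e0 = v := (hsymm e1 e0)
  have huu : ⟪u, u⟫ = C := by have := hB e0 e0 e0; rw [h00] at this; simpa using this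
  have huv : ⟪u, v⟫ = 0 := by
    have := hB e0 e1 e0; rw [h01, hBv] at this; simpa using this
  have hvv : ⟪v, v⟫ = C := by
    have := hB e1 e1 e0; rw [h11, h00, hBv] at this; simpa using this
  have hvw : ⟪v, w⟫ = 0 := by
    have := hB e0 e1 e1; rw [h01, h11] at this; simpa using this
  have hww : ⟪w, w⟫ = C := by
    have := hB e1 e1 e1; rw [h11] at this; simpa using this
  have huw : ⟪u, w⟫ = -C := by
    have h := hB e0 e1 (e0 + e1)
    rw [h01] at h
    have hl : B e0 (e0 + e1) = u + v := by rw [map_add]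
    have hr : B e1 (e0 + e1) = v + w := by rw [map_add, hBv]
    rw [hl, hr] at h
    simp only [inner_add_left, inner_add_right, huv, hvv, hvw, mul_zero, zero_mul] at h
    linarith
  have hwu : w = -u := by
    have hz : ⟪w + u, w + u⟫ = (0 : ℝ) := by
      simp only [inner_add_left, inner_add_right, hww, huu, huw,
        show ⟪w, u⟫ = -C from (real_inner_comm u w).trans huw]
      ring
    have := inner_self_eq_zero.mp hz
    linear_combination (norm := module) this
  -- every value of B lies in span {u, v}
  have hxrep : ∀ x : V, ∃ a c : ℝ, x = a • e0 + c • e1 := by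
    intro x
    refine ⟨b.toBasis.repr x 0, b.toBasis.repr x 1, ?_⟩
    have := b.toBasis.sum_repr x
    rw [Fin.sum_univ_two] at this
    simpa [he0, he1] using this.symm
  set S := Submodule.span ℝ ({u, v} : Set W) with hS
  have huS : u ∈ S := Submodule.subset_span (by simp)
  have hvS : v ∈ S := Submodule.subset_span (by simp)
  have hrange : Submodule.span ℝ (Set.range fun p : V × V => B p.1 p.2) = S := by
    apply le_antisymm
    · rw [Submodule.span_le]
      rintro _ ⟨⟨x, y⟩, rfl⟩
      obtain ⟨a, c, rfl⟩ := hxrep x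
      obtain ⟨d, f, rfl⟩ := hxrep y
      have : B (a • e0 + c • e1) (d • e0 + f • e1) =
          (a * d) • u + (a * f) • v + (c * d) • v + (c * f) • w := by
        simp only [map_add, map_smul, LinearMap.add_apply, LinearMap.smul_apply, hBv,
          ← hu, ← hv, ← hw]
        module
      show B (a • e0 + c • e1) (d • e0 + f • e1) ∈ S
      rw [this, hwu]
      exact S.add_mem (S.add_mem (S.add_mem (S.smul_mem _ huS) (S.smul_mem _ hvS))
        (S.smul_mem _ hvS)) (S.smul_mem _ (S.neg_mem huS))
    · rw [Submodule.span_le]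
      rintro z hz
      rcases hz with rfl | rfl
      · exact Submodule.subset_span ⟨(e0, e0), rfl⟩
      · exact Submodule.subset_span ⟨(e0, e1), rfl⟩
  have hCne : C ≠ 0 := ne_of_gt hC
  have hind : LinearIndependent ℝ ![u, v] := by
    rw [LinearIndependent.pair_iff]
    intro s t hst
    have h1 : ⟪u, s • u + t • v⟫ = (0 : ℝ) := by rw [hst, inner_zero_right]
    have h2 : ⟪v, s • u + t • v⟫ = (0 : ℝ) := by rw [hst, inner_zero_right]
    simp only [inner_add_right, real_inner_smul_right, huu, huv, hvv,
      real_inner_comm u v, mul_zero, add_zero, zero_add] at h1 h2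
    constructor
    · have : s * C = 0 := by linarith
      exact (mul_eq_zero.mp this).resolve_right hCne
    · have : t * C = 0 := by linarith
      exact (mul_eq_zero.mp this).resolve_right hCne
  have hset : Set.range ![u, v] = ({u, v} : Set W) := by
    ext z
    simp [Fin.exists_fin_two, or_comm]
  have hfr : Module.finrank ℝ S = 2 := by
    rw [hS, ← hset, finrank_span_eq_card hind]
    simp
  have hge : 2 ≤ Module.finrank ℝ W := by
    rw [← hfr]
    exact S.finrank_le
  refine ⟨fun h => absurd (le_trans hge h) (by norm_num), fun _ => ⟨?_, hge⟩⟩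
  rw [hrange, hfr]
end
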